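/- Fix k ≥ 2, n ≥ 1. Define the DFA B on state set {1,…,k} × Z_{n+1} over alphabet {a,b,c} where a and b act on the first coordinate as the k-cycle (1 2 … k) and transposition (1 2) respectively (fixing the second coordinate), and c fixes the first coordinate and adds 1 mod n+1 to the second. The initial state is (k,0) and the final set is F_B = { (k,i) | i ∈ Z_{n+1}, i ≠ n }. Then B is a minimal DFA with exactly n final states. -/

import Mathlib

/-- Transition function of the stabilizer witness automaton B: letters 0 and 1
act on the first coordinate as the k-cycle and the transposition (1 2),
letter 2 adds 1 mod n+1 to the second coordinate. -/
def bDelta (k n : ℕ) (hk : 2 ≤ k) :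
    Fin k × ZMod (n + 1) → Fin 3 → Fin k × ZMod (n + 1) :=
  fun p x =>
    if x = 0 then (finRotate k p.1, p.2)
    else if x = 1 then (Equiv.swap (⟨0, by omega⟩ : Fin k) ⟨1, by omega⟩ p.1, p.2)
    else (p.1, p.2 + 1)

/-- Final states of B: first coordinate k, second coordinate different from n. -/
def finB (k n : ℕ) : Set (Fin k × ZMod (n + 1)) :=
  {p | p.1.val = k - 1 ∧ p.2 ≠ (n : ZMod (n + 1))}

/-!
Words in the letters `a = 0` and `c = 2` alone act on the states as the translations
`(x, i) ↦ (x + t, i + s)` of `Z_k × Z_{n+1}`, so every state is reachable, and the final states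
are `{k} × (Z_{n+1} ∖ {n})`. Two states with different first coordinates are separated by the
translation moving the first one to `(k, 0)` (final, as `n ≠ 0`): it moves the second one off
`{k} × Z_{n+1}`. Two distinct states with the same first coordinate are separated
by the translation moving the first one to the non-final state `(k, n)`, which sends the second
one to a final state.
-/

theorem exists_iterate_finRotate_eq {k : ℕ} (x y : Fin k) :
    ∃ t : ℕ, (finRotate k)^[t] x = y := by
  have := x.neZero
  exact ⟨(y - x).val, by rw [← finCycle_eq_finRotate_iterate, finCycle_apply, add_sub_cancel]⟩

theorem ZMod.natCast_self_ne_zero_succ {n : ℕ} (hn : n ≠ 0) : (n : ZMod (n + 1)) ≠ 0 := by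
  rw [Ne, ZMod.natCast_eq_zero_iff]
  exact fun h => hn (Nat.eq_zero_of_dvd_of_lt h n.lt_succ_self)

section

variable {k n : ℕ} (hk : 2 ≤ k)

theorem foldl_bDelta_replicate_zero (t : ℕ) (p : Fin k × ZMod (n + 1)) :
    (List.replicate t 0).foldl (bDelta k n hk) p = ((finRotate k)^[t] p.1, p.2) := by
  induction t generalizing p with
  | zero => rfl
  | succ t ih => simp [List.replicate_succ, ih, bDelta]

theorem foldl_bDelta_replicate_two (s : ℕ) (p : Fin k × ZMod (n + 1)) :
    (List.replicate s 2).foldl (bDelta k n hk) p = (p.1, p.2 + s) := by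
  induction s generalizing p with
  | zero => simp
  | succ s ih => simp [List.replicate_succ, ih, bDelta, add_assoc, add_comm (1 : ZMod (n + 1))]

theorem exists_foldl_bDelta_eq_iterate_add (t : ℕ) (s : ZMod (n + 1)) :
    ∃ w : List (Fin 3), ∀ p, w.foldl (bDelta k n hk) p = ((finRotate k)^[t] p.1, p.2 + s) :=
  ⟨List.replicate t 0 ++ List.replicate s.val 2, fun p => by
    rw [List.foldl_append, foldl_bDelta_replicate_zero, foldl_bDelta_replicate_two,
      ZMod.natCast_zmod_val]⟩

theorem exists_foldl_bDelta_eq (p q : Fin k × ZMod (n + 1)) :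
    ∃ w : List (Fin 3), w.foldl (bDelta k n hk) p = q := by
  obtain ⟨t, ht⟩ := exists_iterate_finRotate_eq p.1 q.1
  obtain ⟨w, hw⟩ := exists_foldl_bDelta_eq_iterate_add hk t (q.2 - p.2)
  exact ⟨w, by rw [hw, ht, add_sub_cancel]⟩

theorem exists_foldl_bDelta_separates (hn : n ≠ 0) {p q : Fin k × ZMod (n + 1)} (hpq : p ≠ q) :
    ∃ w : List (Fin 3),
      ¬(w.foldl (bDelta k n hk) p ∈ finB k n ↔ w.foldl (bDelta k n hk) q ∈ finB k n) := by
  obtain ⟨x, i⟩ := p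
  obtain ⟨y, j⟩ := q
  obtain ⟨t, ht⟩ := exists_iterate_finRotate_eq x ⟨k - 1, by omega⟩
  by_cases hxy : x = y
  · subst hxy
    obtain ⟨w, hw⟩ := exists_foldl_bDelta_eq_iterate_add hk t ((n : ZMod (n + 1)) - i)
    have hj : j + (n - i) ≠ n := fun h => hpq <| by
      rw [add_sub_left_comm, add_eq_left, sub_eq_zero] at h
      rw [h]
    refine ⟨w, ?_⟩
    simp only [hw, ht, finB, Set.mem_ofPred_eq, add_sub_cancel]
    simp [hj]
  · obtain ⟨w, hw⟩ := exists_foldl_bDelta_eq_iterate_add hk t (-i)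
    have hy : ((finRotate k)^[t] y).val ≠ k - 1 := fun h =>
      hxy ((finRotate k).injective.iterate t (ht.trans (Fin.ext h.symm)))
    have h0 : (0 : ZMod (n + 1)) ≠ n := (ZMod.natCast_self_ne_zero_succ hn).symm
    refine ⟨w, ?_⟩
    simp only [hw, ht, finB, Set.mem_ofPred_eq, add_neg_cancel]
    simp [hy, h0]

end

theorem ncard_finB {k n : ℕ} (hk : 0 < k) : (finB k n).ncard = n := by
  have : finB k n = {⟨k - 1, by omega⟩} ×ˢ {(n : ZMod (n + 1))}ᶜ := by
    ext ⟨x, i⟩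
    simp [finB, Fin.ext_iff]
  rw [this, Set.ncard_prod, Set.ncard_singleton, Set.ncard_compl, Set.ncard_singleton,
    Nat.card_zmod]
  simp

/-- B is a minimal DFA with exactly n final states. -/
theorem stmt_13 (k n : ℕ) (hk : 2 ≤ k) (hn : 1 ≤ n) :
    (∀ p : Fin k × ZMod (n + 1),
        ∃ w : List (Fin 3), w.foldl (bDelta k n hk) (⟨k - 1, by omega⟩, 0) = p) ∧
      (∀ p q : Fin k × ZMod (n + 1), p ≠ q → ∃ w : List (Fin 3),
        ¬(w.foldl (bDelta k n hk) p ∈ finB k n ↔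
          w.foldl (bDelta k n hk) q ∈ finB k n)) ∧
      (finB k n).ncard = n :=
  ⟨exists_foldl_bDelta_eq hk _, fun _ _ => exists_foldl_bDelta_separates hk (by omega),
    ncard_finB (by omega)⟩
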